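/- arXiv:2501.06856 — 6 statements merged into one kernel-verified Lean document; each statement's English description precedes it below -/
import Mathlib

section
/- For every integer n ≥ 3, g(1,n) = 3 - 2n + 2·ln(n/(n-1))·(n-1)² > 0. -/
theorem g_one_pos (n : ℝ) (hn : 3 ≤ n) :
    3 - 2 * n + 2 * Real.log (n / (n - 1)) * (n - 1) ^ 2 > 0 := by
  have hn0 : (0:ℝ) < n := by linarith
  have hn1 : (0:ℝ) < n - 1 := by linarith
  have hs : (0:ℝ) < 1 / n := by positivity
  have hx : |(1:ℝ)/n| < 1 := by
    rw [abs_of_pos hs, div_lt_one hn0]; linarith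
  have H := Real.abs_log_sub_add_sum_range_le hx 3
  rw [abs_of_pos hs] at H
  norm_num [Finset.sum_range_succ] at H
  have h1 : (1:ℝ) - n⁻¹ = (n-1)/n := by field_simp
  have h2 : Real.log ((n-1)/n) = - Real.log (n/(n-1)) := by
    rw [← Real.log_inv]; congr 1; field_simp
  rw [h1, h2] at H
  have H2 := (abs_le.mp H).2
  have e : (n^4)⁻¹ / ((n-1)/n) = 1/(n^3*(n-1)) := by
    field_simp
  rw [e] at H2
  have hL : Real.log (n/(n-1)) ≥
      n⁻¹ + (n^2)⁻¹/2 + (n^3)⁻¹/3 - 1/(n^3*(n-1)) := by linarith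
  have key : 2 * (n⁻¹ + (n^2)⁻¹/2 + (n^3)⁻¹/3 - 1/(n^3*(n-1))) * (n-1)^2
      > 2*n - 3 := by
    rw [gt_iff_lt, ← sub_pos]
    have hpos : (0:ℝ) < 6*n^3*(n-1) := by positivity
    have heq : (2 * (n⁻¹ + (n^2)⁻¹/2 + (n^3)⁻¹/3 - 1/(n^3*(n-1))) * (n-1)^2
        - (2*n - 3)) * (6*n^3*(n-1)) = 4*n^3 - 18*n^2 + 30*n - 16 := by
      field_simp
      ring
    have hp : (0:ℝ) < 4*n^3 - 18*n^2 + 30*n - 16 := by nlinarith [sq_nonneg (n-2), sq_nonneg n]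
    nlinarith [hp, hpos, heq]
  nlinarith [hL, key, sq_nonneg (n-1)]
end

section
/- For every real n ≥ 3 and every k in [1, n), the inequality 3k² - 2nk + 2·ln(n/(n-k))·(n-k)² > 0 holds. -/
theorem g_pos (n k : ℝ) (hn : 3 ≤ n) (hk1 : 1 ≤ k) (hkn : k < n) :
    3 * k ^ 2 - 2 * n * k + 2 * Real.log (n / (n - k)) * (n - k) ^ 2 > 0 := by
  have hn0 : (0:ℝ) < n := by linarith
  have hnk : (0:ℝ) < n - k := by linarith
  set x := k / n with hxdef
  have hx0 : 0 < x := div_pos (by linarith) hn0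
  have hx1 : x < 1 := (div_lt_one hn0).2 hkn
  have h1xpos : (0:ℝ) < 1 - x := by linarith
  have h1x : 1 - x = (n - k) / n := by rw [hxdef]; field_simp
  have hlog : Real.log (n / (n - k)) = -Real.log (1 - x) := by
    rw [h1x, Real.log_div hnk.ne' hn0.ne', Real.log_div hn0.ne' hnk.ne']
    ring
  have habs := Real.abs_log_sub_add_sum_range_le (x := x)
    (by rw [abs_of_pos hx0]; exact hx1) 3
  rw [abs_of_pos hx0] at habs
  have hsum : (∑ i ∈ Finset.range 3, x ^ (i+1) / (i+1)) = x + x^2/2 + x^3/3 := by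
    simp [Finset.sum_range_succ]
    ring
  rw [hsum] at habs
  have hb : x + x^2/2 + x^3/3 + Real.log (1 - x) ≤ x^(3+1) / (1 - x) :=
    (abs_le.mp habs).2
  have hmul : (1 - x) * (x + x^2/2 + x^3/3 + Real.log (1 - x)) ≤ x^4 := by
    calc (1 - x) * (x + x^2/2 + x^3/3 + Real.log (1 - x))
        ≤ (1 - x) * (x^(3+1) / (1 - x)) := by
          exact mul_le_mul_of_nonneg_left hb (le_of_lt h1xpos)
      _ = x^4 := by field_simp
  have key : 3*x^2 - 2*x + 2*(-Real.log (1-x))*(1-x)^2 > 0 := by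
    nlinarith [hmul, mul_pos (mul_pos hx0 hx0) hx0, sq_nonneg (4*x - 7/4),
      mul_le_mul_of_nonneg_left hmul (le_of_lt h1xpos),
      mul_pos (mul_pos (mul_pos hx0 hx0) hx0) h1xpos]
  have hk2 : k = x * n := by rw [hxdef]; field_simp
  have hnk2 : n - k = (1 - x) * n := by rw [h1x]; field_simp
  rw [hlog, hnk2, hk2]
  nlinarith [mul_pos (mul_pos hn0 hn0) key]
end

section
/- For every real n ≥ 3, the function f(k) = (1/k)·ln(n/(n-k)) is strictly convex on the interval [1, n). -/
open Real Set

lemma log_aux {t : ℝ} (ht0 : 0 < t) (ht1 : t < 1) :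
    t + t ^ 2 / 2 ≤ -Real.log (1 - t) := by
  set φ : ℝ → ℝ := fun x => -Real.log (1 - x) - x - x ^ 2 / 2 with hφ
  have hcont : ContinuousOn φ (Set.Icc 0 t) := by
    apply ContinuousOn.sub
    apply ContinuousOn.sub
    · apply ContinuousOn.neg
      apply ContinuousOn.log
      · exact (continuous_const.sub continuous_id).continuousOn
      · intro x hx
        have : x ≤ t := hx.2
        have : (0:ℝ) < 1 - x := by linarith
        exact this.ne'
    · exact continuousOn_id
    · exact (continuous_pow 2).continuousOn.div_const 2
  have hderiv : ∀ x ∈ interior (Set.Icc (0:ℝ) t), 0 < deriv φ x := by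
    intro x hx
    rw [interior_Icc] at hx
    obtain ⟨hx0, hxt⟩ := hx
    have h1x : (0:ℝ) < 1 - x := by linarith
    have h1 : HasDerivAt (fun y : ℝ => 1 - y) (-1) x := (hasDerivAt_id x).const_sub 1
    have h2 : HasDerivAt (fun y : ℝ => Real.log (1 - y)) ((1 - x)⁻¹ * (-1)) x :=
      (Real.hasDerivAt_log h1x.ne').comp x h1
    have h3 : HasDerivAt (fun y : ℝ => y ^ 2 / 2) (2 * x ^ 1 / 2) x :=
      (hasDerivAt_pow 2 x).div_const 2
    have hd : HasDerivAt φ (-((1 - x)⁻¹ * (-1)) - 1 - 2 * x ^ 1 / 2) x :=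
      (h2.neg.sub (hasDerivAt_id x)).sub h3
    rw [hd.deriv]
    have : -((1 - x)⁻¹ * (-1)) - 1 - 2 * x ^ 1 / 2 = x ^ 2 / (1 - x) := by
      field_simp
      ring
    rw [this]
    positivity
  have mono := strictMonoOn_of_deriv_pos (convex_Icc 0 t) hcont hderiv
  have h := mono (Set.left_mem_Icc.2 ht0.le) (Set.right_mem_Icc.2 ht0.le) ht0
  have h0 : φ 0 = 0 := by simp [hφ]
  rw [h0] at h
  simp only [hφ] at h
  linarith

theorem f_strictConvexOn (n : ℝ) (hn : 3 ≤ n) :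
    StrictConvexOn ℝ (Set.Ico 1 n) (fun k : ℝ => (1 / k) * Real.log (n / (n - k))) := by
  have hn0 : (0:ℝ) < n := by linarith
  apply strictConvexOn_of_deriv2_pos (convex_Ico 1 n)
  · -- continuity
    apply ContinuousOn.mul
    · exact continuousOn_const.div continuousOn_id
        (fun x hx => by have := hx.1; intro h; rw [h] at this; linarith)
    · apply ContinuousOn.log
      · exact continuousOn_const.div (continuous_const.sub continuous_id).continuousOn
          (fun x hx => by have h2 := hx.2; intro h; have := sub_eq_zero.1 h; linarith)
      · intro x hx
        have h1 : (0:ℝ) < n - x := by have := hx.2; simp only [Set.mem_Ico] at *; linarith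
        positivity
  · intro x hx
    rw [interior_Ico] at hx
    obtain ⟨hx1, hxn⟩ := hx
    have hx0 : (0:ℝ) < x := by linarith
    have hb : (0:ℝ) < n - x := by linarith
    -- first derivative on Ioo 1 n
    have hg : ∀ y ∈ Set.Ioo (1:ℝ) n,
        deriv (fun k : ℝ => (1 / k) * Real.log (n / (n - k))) y
        = -(y ^ 2)⁻¹ * (Real.log n - Real.log (n - y)) + y⁻¹ * (n - y)⁻¹ := by
      intro y hy
      obtain ⟨hy1, hyn⟩ := hy
      have hy0 : (0:ℝ) < y := by linarith
      have hby : (0:ℝ) < n - y := by linarith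
      have hev : (fun k : ℝ => (1 / k) * Real.log (n / (n - k))) =ᶠ[nhds y]
          (fun k : ℝ => k⁻¹ * (Real.log n - Real.log (n - k))) := by
        filter_upwards [Ioo_mem_nhds hy1 hyn] with k hk
        obtain ⟨hk1, hkn⟩ := hk
        rw [one_div, Real.log_div hn0.ne' (by linarith : n - k ≠ 0)]
      rw [hev.deriv_eq]
      have h1 : HasDerivAt (fun k : ℝ => k⁻¹) (-(y ^ 2)⁻¹) y := hasDerivAt_inv hy0.ne'
      have h2 : HasDerivAt (fun k : ℝ => Real.log (n - k)) ((n - y)⁻¹ * (-1)) y :=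
        (Real.hasDerivAt_log hby.ne').comp y ((hasDerivAt_id y).const_sub n)
      have h3 : HasDerivAt (fun k : ℝ => Real.log n - Real.log (n - k))
          (-((n - y)⁻¹ * (-1))) y := h2.const_sub _
      have h4 : deriv (fun k : ℝ => k⁻¹ * (Real.log n - Real.log (n - k))) y
          = -(y ^ 2)⁻¹ * (Real.log n - Real.log (n - y)) + y⁻¹ * (-((n - y)⁻¹ * (-1))) :=
        (h1.mul h3).deriv
      rw [h4]
      ring
    have hev2 : deriv (fun k : ℝ => (1 / k) * Real.log (n / (n - k))) =ᶠ[nhds x]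
        (fun y : ℝ => -(y ^ 2)⁻¹ * (Real.log n - Real.log (n - y)) + y⁻¹ * (n - y)⁻¹) := by
      filter_upwards [Ioo_mem_nhds hx1 hxn] with y hy
      exact hg y hy
    show 0 < deriv (deriv (fun k : ℝ => (1 / k) * Real.log (n / (n - k)))) x
    rw [hev2.deriv_eq]
    -- second derivative
    have hsq : HasDerivAt (fun k : ℝ => k ^ 2) (2 * x) x := by
      simpa using hasDerivAt_pow 2 x
    have hsqi : HasDerivAt (fun k : ℝ => (k ^ 2)⁻¹) (-(2 * x) / (x ^ 2) ^ 2) x :=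
      hsq.inv (pow_ne_zero 2 hx0.ne')
    have h2 : HasDerivAt (fun k : ℝ => Real.log (n - k)) ((n - x)⁻¹ * (-1)) x :=
      (Real.hasDerivAt_log hb.ne').comp x ((hasDerivAt_id x).const_sub n)
    have h3 : HasDerivAt (fun k : ℝ => Real.log n - Real.log (n - k))
        (-((n - x)⁻¹ * (-1))) x := h2.const_sub _
    have hnki : HasDerivAt (fun k : ℝ => (n - k)⁻¹) (-(-1) / (n - x) ^ 2) x :=
      ((hasDerivAt_id x).const_sub n).inv hb.ne'
    have htot : deriv (fun y : ℝ =>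
        -(y ^ 2)⁻¹ * (Real.log n - Real.log (n - y)) + y⁻¹ * (n - y)⁻¹) x
        = (-(-(2 * x) / (x ^ 2) ^ 2) * (Real.log n - Real.log (n - x))
            + -(x ^ 2)⁻¹ * -((n - x)⁻¹ * (-1)))
          + ((-(x ^ 2)⁻¹) * (n - x)⁻¹ + x⁻¹ * (-(-1) / (n - x) ^ 2)) :=
      ((hsqi.neg.mul h3).add ((hasDerivAt_inv hx0.ne').mul hnki)).deriv
    rw [htot]
    set L := Real.log n - Real.log (n - x) with hLdef
    have hL : x / n + (x / n) ^ 2 / 2 ≤ L := by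
      have h := log_aux (t := x / n) (by positivity) ((div_lt_one hn0).2 hxn)
      have h1 : (1 : ℝ) - x / n = (n - x) / n := by field_simp
      rw [h1, Real.log_div hb.ne' hn0.ne'] at h
      rw [hLdef]
      linarith
    have hL2 : 2 * x * n + x ^ 2 ≤ 2 * L * n ^ 2 := by
      have h2' := mul_le_mul_of_nonneg_left hL (by positivity : (0:ℝ) ≤ 2 * n ^ 2)
      have e : 2 * n ^ 2 * (x / n + (x / n) ^ 2 / 2) = 2 * x * n + x ^ 2 := by
        field_simp
      rw [e] at h2'
      linarith
    have key : 0 < 2 * L * (n - x) ^ 2 + x * (3 * x - 2 * n) := by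
      nlinarith [mul_le_mul_of_nonneg_right hL2 (sq_nonneg (n - x)), pow_pos hx0 4,
        mul_pos hn0 hn0, sq_nonneg (n - x)]
    have hden : (0:ℝ) < x ^ 3 * (n - x) ^ 2 := by positivity
    have := div_pos key hden
    convert this using 1
    · rfl
    field_simp
    ring
end

section
/- For all real numbers n ≥ 3, constants h₁ ≥ 0, h₂ ≥ 0, h₃ ≥ 0, h₄ ≥ 0, the function P(k) = h₁·k + h₂/k + h₃·(1/k)·ln(n/(n-k)) + h₄·ln(n/(n-k)) is convex on [1, n). -/
open Real Set

/-- Key inequality: `2u - u² ≤ 2 log(1+u)` for `u > 0`. -/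
lemma aux_log_ineq (u : ℝ) (hu : 0 < u) :
    2 * u - u ^ 2 ≤ 2 * Real.log (1 + u) := by
  set ψ : ℝ → ℝ := fun t => 2 * Real.log (1 + t) - 2 * t + t ^ 2 with hψ
  have hmono : StrictMonoOn ψ (Ici 0) := by
    apply strictMonoOn_of_deriv_pos (convex_Ici 0)
    · apply ContinuousOn.add
      · apply ContinuousOn.sub
        · exact (continuousOn_const.mul ((continuousOn_const.add continuousOn_id).log
            (fun t ht => by simp only [mem_Ici] at ht; show (1:ℝ) + t ≠ 0; positivity)))
        · exact continuousOn_const.mul continuousOn_id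
      · exact (continuousOn_id.pow 2)
    · intro t ht
      rw [interior_Ici] at ht
      have ht0 : (0:ℝ) < t := ht
      have h1t : (0:ℝ) < 1 + t := by linarith
      have hd : HasDerivAt ψ (2 * (1 / (1 + t)) - 2 + 2 * t) t := by
        have hbase : HasDerivAt (fun s : ℝ => 1 + s) 1 t :=
          (hasDerivAt_id t).const_add 1
        have hlog : HasDerivAt (fun s : ℝ => Real.log (1 + s)) (1 / (1 + t)) t := by
          simpa using hbase.log h1t.ne'
        have := ((hlog.const_mul 2).sub ((hasDerivAt_id t).const_mul 2)).add
          ((hasDerivAt_id t).pow 2)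
        refine this.congr_deriv ?_
        simp only [id_eq]
        ring
      rw [hd.deriv]
      have heq : 2 * (1 / (1 + t)) - 2 + 2 * t = 2 * t ^ 2 / (1 + t) := by
        field_simp; ring
      rw [heq]; positivity
  have h0 : ψ 0 < ψ u := hmono (self_mem_Ici) (le_of_lt hu) hu
  have hz : ψ 0 = 0 := by simp [hψ]
  rw [hz] at h0
  simp only [hψ] at h0
  linarith

theorem P_convexOn (n h₁ h₂ h₃ h₄ : ℝ) (hn : 3 ≤ n)
    (h1 : 0 ≤ h₁) (h2 : 0 ≤ h₂) (h3 : 0 ≤ h₃) (h4 : 0 ≤ h₄) :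
    ConvexOn ℝ (Set.Ico 1 n)
      (fun k : ℝ => h₁ * k + h₂ / k + h₃ * (1 / k) * Real.log (n / (n - k))
        + h₄ * Real.log (n / (n - k))) := by
  have hn0 : (0:ℝ) < n := by linarith
  -- derivative of the log part
  have hL : ∀ x : ℝ, 0 < x → x < n →
      HasDerivAt (fun k : ℝ => Real.log (n / (n - k))) (1 / (n - x)) x := by
    intro x hx0 hxn
    have hnx : (0:ℝ) < n - x := by linarith
    have h1 : HasDerivAt (fun k : ℝ => n - k) (-1) x := (hasDerivAt_id x).const_sub n
    have h2 : HasDerivAt (fun k : ℝ => n / (n - k))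
        ((0 * (n - x) - n * (-1)) / (n - x) ^ 2) x :=
      (hasDerivAt_const x n).div h1 hnx.ne'
    have hq : n / (n - x) ≠ 0 := by positivity
    have h3 := h2.log hq
    convert h3 using 1
    field_simp
    ring
  apply convexOn_of_hasDerivWithinAt2_nonneg (convex_Ico 1 n)
    (f' := fun x => h₁ - h₂ / x ^ 2
      + h₃ * (-(Real.log (n / (n - x))) / x ^ 2 + 1 / (x * (n - x)))
      + h₄ * (1 / (n - x)))
    (f'' := fun x => 2 * h₂ / x ^ 3
      + h₃ * (2 * Real.log (n / (n - x)) / x ^ 3 - 2 / (x ^ 2 * (n - x)) + 1 / (x * (n - x) ^ 2))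
      + h₄ * (1 / (n - x) ^ 2))
  · -- continuity
    apply ContinuousOn.add
    apply ContinuousOn.add
    apply ContinuousOn.add
    · exact (continuousOn_const.mul continuousOn_id)
    · exact continuousOn_const.div continuousOn_id
        (fun x hx => by have := hx.1; intro h; rw [h] at this; linarith)
    · apply ContinuousOn.mul
      · exact continuousOn_const.mul (continuousOn_const.div continuousOn_id
          (fun x hx => by have := hx.1; intro h; rw [h] at this; linarith))
      · apply ContinuousOn.log
        · exact continuousOn_const.div (continuousOn_const.sub continuousOn_id)
            (fun x hx => by have := hx.2; intro h; linarith)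
        · intro x hx
          have h1 : (0:ℝ) < n - x := by have := hx.2; linarith
          positivity
    · apply ContinuousOn.mul continuousOn_const
      apply ContinuousOn.log
      · exact continuousOn_const.div (continuousOn_const.sub continuousOn_id)
          (fun x hx => by have := hx.2; intro h; linarith)
      · intro x hx
        have h1 : (0:ℝ) < n - x := by have := hx.2; linarith
        positivity
  · -- first derivative
    intro x hx
    rw [interior_Ico] at hx
    have hx1 : (1:ℝ) < x := hx.1
    have hxn : x < n := hx.2
    have hx0 : (0:ℝ) < x := by linarith
    have hnx : (0:ℝ) < n - x := by linarith
    have hLx := hL x hx0 hxn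
    have hA : HasDerivAt (fun k : ℝ => h₁ * k) h₁ x := by
      simpa using (hasDerivAt_id x).const_mul h₁
    have hB : HasDerivAt (fun k : ℝ => h₂ / k) ((0 * x - h₂ * 1) / x ^ 2) x :=
      (hasDerivAt_const x h₂).div (hasDerivAt_id x) hx0.ne'
    have hInv : HasDerivAt (fun k : ℝ => 1 / k) ((0 * x - 1 * 1) / x ^ 2) x :=
      (hasDerivAt_const x (1:ℝ)).div (hasDerivAt_id x) hx0.ne'
    have hC : HasDerivAt (fun k : ℝ => h₃ * (1 / k) * Real.log (n / (n - k)))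
        ((h₃ * ((0 * x - 1 * 1) / x ^ 2)) * Real.log (n / (n - x))
          + (h₃ * (1 / x)) * (1 / (n - x))) x :=
      ((hInv.const_mul h₃).mul hLx)
    have hD : HasDerivAt (fun k : ℝ => h₄ * Real.log (n / (n - k))) (h₄ * (1 / (n - x))) x :=
      hLx.const_mul h₄
    have := ((hA.add hB).add hC).add hD
    refine (HasDerivAt.hasDerivWithinAt ?_)
    convert this using 1
    · rfl
    field_simp [hx0.ne', hnx.ne']
    ring
  · -- second derivative
    intro x hx
    rw [interior_Ico] at hx
    have hx1 : (1:ℝ) < x := hx.1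
    have hxn : x < n := hx.2
    have hx0 : (0:ℝ) < x := by linarith
    have hnx : (0:ℝ) < n - x := by linarith
    have hLx := hL x hx0 hxn
    have hid2 : HasDerivAt (fun k : ℝ => k ^ 2) (↑2 * x ^ (2 - 1) * 1) x :=
      (hasDerivAt_id x).pow 2
    have hsub : HasDerivAt (fun k : ℝ => n - k) (-1) x := (hasDerivAt_id x).const_sub n
    have hA : HasDerivAt (fun _ : ℝ => h₁) 0 x := hasDerivAt_const x h₁
    have hB : HasDerivAt (fun k : ℝ => h₂ / k ^ 2)
        ((0 * x ^ 2 - h₂ * (↑2 * x ^ (2 - 1) * 1)) / (x ^ 2) ^ 2) x :=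
      (hasDerivAt_const x h₂).div hid2 (by positivity)
    have hC1 : HasDerivAt (fun k : ℝ => -(Real.log (n / (n - k))) / k ^ 2)
        ((-(1 / (n - x)) * x ^ 2 - (-(Real.log (n / (n - x)))) * (↑2 * x ^ (2 - 1) * 1))
          / (x ^ 2) ^ 2) x :=
      hLx.neg.div hid2 (by positivity)
    have hprod : HasDerivAt (fun k : ℝ => k * (n - k)) (1 * (n - x) + x * (-1)) x :=
      (hasDerivAt_id x).mul hsub
    have hC2 : HasDerivAt (fun k : ℝ => 1 / (k * (n - k)))
        ((0 * (x * (n - x)) - 1 * (1 * (n - x) + x * (-1))) / (x * (n - x)) ^ 2) x :=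
      (hasDerivAt_const x (1:ℝ)).div hprod (by positivity)
    have hC := (hC1.add hC2).const_mul h₃
    have hD : HasDerivAt (fun k : ℝ => 1 / (n - k))
        ((0 * (n - x) - 1 * (-1)) / (n - x) ^ 2) x :=
      (hasDerivAt_const x (1:ℝ)).div hsub hnx.ne'
    have := ((hA.add hB.neg).add hC).add (hD.const_mul h₄)
    refine (HasDerivAt.hasDerivWithinAt ?_)
    convert this using 1
    · rfl
    field_simp [hx0.ne', hnx.ne']
    ring
  · -- nonnegativity of second derivative
    intro x hx
    rw [interior_Ico] at hx
    have hx1 : (1:ℝ) < x := hx.1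
    have hxn : x < n := hx.2
    have hx0 : (0:ℝ) < x := by linarith
    have hnx : (0:ℝ) < n - x := by linarith
    have hu : (0:ℝ) < x / (n - x) := by positivity
    have hlog : 2 * (x / (n - x)) - (x / (n - x)) ^ 2
        ≤ 2 * Real.log (n / (n - x)) := by
      have h1 : n / (n - x) = 1 + x / (n - x) := by field_simp; ring
      rw [h1]
      exact aux_log_ineq _ hu
    have hT : 0 ≤ 2 * Real.log (n / (n - x)) / x ^ 3 - 2 / (x ^ 2 * (n - x))
        + 1 / (x * (n - x) ^ 2) := by
      have heq : 2 * Real.log (n / (n - x)) / x ^ 3 - 2 / (x ^ 2 * (n - x))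
          + 1 / (x * (n - x) ^ 2)
          = (2 * Real.log (n / (n - x)) - (2 * (x / (n - x)) - (x / (n - x)) ^ 2)) / x ^ 3 := by
        field_simp
        ring
      rw [heq]
      apply div_nonneg (by linarith) (by positivity)
    have t1 : 0 ≤ 2 * h₂ / x ^ 3 := by positivity
    have t3 : 0 ≤ h₄ * (1 / (n - x) ^ 2) := by positivity
    have t2 : 0 ≤ h₃ * (2 * Real.log (n / (n - x)) / x ^ 3 - 2 / (x ^ 2 * (n - x))
        + 1 / (x * (n - x) ^ 2)) := mul_nonneg h3 hT
    linarith
end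

section
/- If n ≥ 10 is real and R ≤ 1, then there exists k ∈ (1, n) such that (k·ln n - n·ln(n/(n-k)))/(n-k) > R; in particular k = n - e works since h(n, n-e) = n/e - ln n > 1 ≥ R. -/
open Real

theorem coded_beats_uncoded (n R : ℝ) (hn : 10 ≤ n) (hR0 : 0 ≤ R) (hR : R ≤ 1) :
    ∃ k : ℝ, 1 < k ∧ k < n ∧
      (k * Real.log n - n * Real.log (n / (n - k))) / (n - k) > R := by
  have he1 : Real.exp 1 < 2.7182818286 := Real.exp_one_lt_d9
  have he0 : (0:ℝ) < Real.exp 1 := Real.exp_pos 1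
  refine ⟨n - Real.exp 1, by linarith, by linarith, ?_⟩
  have hnk : n - (n - Real.exp 1) = Real.exp 1 := by ring
  rw [hnk]
  have hnpos : (0:ℝ) < n := by linarith
  have hlogdiv : Real.log (n / Real.exp 1) = Real.log n - 1 := by
    rw [Real.log_div (ne_of_gt hnpos) (ne_of_gt he0), Real.log_exp]
  rw [hlogdiv]
  -- expression = ((n - e) log n - n (log n - 1))/e = (n - e log n)/e
  have key : Real.log n ≤ n / (Real.exp 1)^2 + 1 := by
    have h2 : Real.log (n / (Real.exp 1)^2) ≤ n / (Real.exp 1)^2 - 1 :=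
      Real.log_le_sub_one_of_pos (by positivity)
    have : Real.log (n / (Real.exp 1)^2) = Real.log n - 2 := by
      rw [Real.log_div (ne_of_gt hnpos) (by positivity), ← Real.exp_nat_mul,
        Real.log_exp] <;> norm_num
    linarith [this ▸ h2]
  have hnum : (n - Real.exp 1) * Real.log n - n * (Real.log n - 1)
      = n - Real.exp 1 * Real.log n := by ring
  rw [hnum, gt_iff_lt, lt_div_iff₀ he0]
  -- need R * e < n - e * log n; since R ≤ 1 suffices e + e·log n < n
  have hel : Real.exp 1 * Real.log n ≤ n / Real.exp 1 + Real.exp 1 := by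
    have := mul_le_mul_of_nonneg_left key (le_of_lt he0)
    have hsimp : Real.exp 1 * (n / (Real.exp 1)^2 + 1)
        = n / Real.exp 1 + Real.exp 1 := by
      field_simp
    linarith [hsimp ▸ this]
  have hdiv : n / Real.exp 1 ≤ n * 0.38 := by
    rw [div_le_iff₀ he0]
    nlinarith [Real.exp_one_gt_d9]
  have hRe : R * Real.exp 1 ≤ Real.exp 1 := by nlinarith
  linarith
end

section
/- Fix n ≥ 3 and positive constants h₁, h₃, h₄. If h₂' > h₂ > 0 and k̂, k̂' ∈ (1,n) satisfy the first-order conditions -h₁ + h₂/k̂² = h₄/(n-k̂) + h₃(-(1/k̂²)ln(n/(n-k̂)) + 1/(k̂(n-k̂))) and the same with (h₂', k̂'), then k̂' ≥ k̂. -/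
lemma log_lb (x : ℝ) (hx : 1 ≤ x) : 2 * (x - 1) / (x + 1) ≤ Real.log x := by
  have hd : ∀ y : ℝ, 0 < y → HasDerivAt (fun x : ℝ => Real.log x - 2 * (x - 1) / (x + 1))
      ((y - 1)^2 / (y * (y + 1)^2)) y := by
    intro y hy
    have hne : y + 1 ≠ 0 := by positivity
    have h2 : HasDerivAt (fun x : ℝ => 2 * (x - 1) / (x + 1))
        ((2 * 1 * (y + 1) - 2 * (y - 1) * 1) / (y + 1)^2) y :=
      (((hasDerivAt_id' (x := y)).sub_const 1).const_mul 2).div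
        ((hasDerivAt_id' (x := y)).add_const 1) hne
    have h1 := (Real.hasDerivAt_log (ne_of_gt hy)).sub h2
    refine h1.congr_deriv ?_
    field_simp
    ring
  have key : MonotoneOn (fun x : ℝ => Real.log x - 2 * (x - 1) / (x + 1)) (Set.Ici 1) := by
    apply monotoneOn_of_deriv_nonneg (convex_Ici 1)
    · intro x hx
      simp only [Set.mem_Ici] at hx
      exact (hd x (by linarith)).differentiableAt.continuousAt.continuousWithinAt
    · intro x hx
      rw [interior_Ici] at hx
      simp only [Set.mem_Ioi] at hx
      exact ((hd x (by linarith)).differentiableAt.differentiableWithinAt)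
    · intro x hx
      rw [interior_Ici] at hx
      simp only [Set.mem_Ioi] at hx
      have hx0 : (0:ℝ) < x := by linarith
      rw [(hd x hx0).deriv]
      positivity
  have := key Set.self_mem_Ici (show x ∈ Set.Ici 1 from hx) hx
  simp only [Real.log_one] at this
  norm_num at this
  linarith

set_option maxHeartbeats 1000000 in
theorem optimal_split_mono_in_h2 (n h₁ h₂ h₂' h₃ h₄ : ℝ) (hn : 3 ≤ n)
    (h1 : 0 < h₁) (h3 : 0 < h₃) (h4 : 0 < h₄) (hh2 : 0 < h₂) (hh2' : h₂ < h₂')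
    (khat khat' : ℝ) (hk : khat ∈ Set.Ioo 1 n) (hk' : khat' ∈ Set.Ioo 1 n)
    (hfoc : -h₁ + h₂ / khat ^ 2 = h₄ / (n - khat)
        + h₃ * (-(1 / khat ^ 2) * Real.log (n / (n - khat)) + 1 / (khat * (n - khat))))
    (hfoc' : -h₁ + h₂' / khat' ^ 2 = h₄ / (n - khat')
        + h₃ * (-(1 / khat' ^ 2) * Real.log (n / (n - khat')) + 1 / (khat' * (n - khat')))) :
    khat ≤ khat' := by
  set F : ℝ → ℝ := fun k => h₄ / (n - k)
      + h₃ * (-(1 / k ^ 2) * Real.log (n / (n - k)) + 1 / (k * (n - k))) with hF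
  have hn0 : (0:ℝ) < n := by linarith
  have hderiv : ∀ k ∈ Set.Ioo (1:ℝ) n, HasDerivAt F
      (h₄ / (n - k)^2 + h₃ * (2 * Real.log (n / (n - k)) / k^3
        - (2*n - 3*k) / (k^2 * (n - k)^2))) k := by
    intro k hkm
    obtain ⟨hk1, hkn⟩ := hkm
    have hk0 : (0:ℝ) < k := by linarith
    have hnk : (0:ℝ) < n - k := by linarith
    have h1' : HasDerivAt (fun k : ℝ => n - k) (-1) k := (hasDerivAt_id' (x := k)).const_sub n
    have hA : HasDerivAt (fun k : ℝ => h₄ / (n - k))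
        ((0 * (n - k) - h₄ * (-1)) / (n - k)^2) k :=
      (hasDerivAt_const k h₄).div h1' (ne_of_gt hnk)
    have hq : HasDerivAt (fun k : ℝ => n / (n - k))
        ((0 * (n - k) - n * (-1)) / (n - k)^2) k :=
      (hasDerivAt_const k n).div h1' (ne_of_gt hnk)
    have hqne : n / (n - k) ≠ 0 := by positivity
    have hL : HasDerivAt (fun k : ℝ => Real.log (n / (n - k)))
        (((0 * (n - k) - n * (-1)) / (n - k)^2) / (n / (n - k))) k := hq.log hqne
    have hLval : ((0 * (n - k) - n * (-1)) / (n - k)^2) / (n / (n - k)) = 1 / (n - k) := by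
      field_simp
      ring
    rw [hLval] at hL
    have hpow : HasDerivAt (fun k : ℝ => k ^ 2) ((2:ℕ) * k ^ 1) k := hasDerivAt_pow 2 k
    have hm : HasDerivAt (fun k : ℝ => -(1 / k ^ 2))
        (-((0 * k^2 - 1 * ((2:ℕ) * k ^ 1)) / (k^2)^2)) k :=
      ((hasDerivAt_const k 1).div hpow (by positivity)).neg
    have hP := hm.mul hL
    have hkk : HasDerivAt (fun k : ℝ => k * (n - k)) (1 * (n - k) + k * (-1)) k :=
      (hasDerivAt_id' (x := k)).mul h1'
    have hB : HasDerivAt (fun k : ℝ => 1 / (k * (n - k)))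
        ((0 * (k * (n - k)) - 1 * (1 * (n - k) + k * (-1))) / (k * (n - k))^2) k :=
      (hasDerivAt_const k 1).div hkk (by positivity)
    have total := hA.add ((hP.add hB).const_mul h₃)
    refine total.congr_deriv ?_
    push_cast
    field_simp
    ring
  have hpos : ∀ k ∈ Set.Ioo (1:ℝ) n,
      0 < h₄ / (n - k)^2 + h₃ * (2 * Real.log (n / (n - k)) / k^3
        - (2*n - 3*k) / (k^2 * (n - k)^2)) := by
    intro k hkm
    obtain ⟨hk1, hkn⟩ := hkm
    have hk0 : (0:ℝ) < k := by linarith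
    have hnk : (0:ℝ) < n - k := by linarith
    have h2nk : (0:ℝ) < 2*n - k := by linarith
    have hx1 : (1:ℝ) ≤ n / (n - k) := by
      rw [le_div_iff₀ hnk]; linarith
    have hlog := log_lb (n / (n - k)) hx1
    have heq : 2 * (n / (n - k) - 1) / (n / (n - k) + 1) = 2*k / (2*n - k) := by
      rw [div_eq_div_iff (by positivity) (by positivity)]
      field_simp
      ring
    rw [heq] at hlog
    have key1 : (2*n - 3*k) / (k^2 * (n - k)^2) ≤ 4 / (k^2 * (2*n - k)) := by
      rw [div_le_div_iff₀ (by positivity) (by positivity)]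
      nlinarith [sq_nonneg k, mul_pos (mul_pos hk0 hk0) (mul_pos hk0 hk0)]
    have key1' : (4 : ℝ) / (k^2 * (2*n - k)) = 2 * (2*k / (2*n - k)) / k^3 := by
      field_simp
      ring
    have key2 : 2 * (2*k / (2*n - k)) / k^3 ≤ 2 * Real.log (n / (n - k)) / k^3 := by
      gcongr
    have hkey : (2*n - 3*k) / (k^2 * (n - k)^2) ≤ 2 * Real.log (n / (n - k)) / k^3 := by
      calc (2*n - 3*k) / (k^2 * (n - k)^2) ≤ 4 / (k^2 * (2*n - k)) := key1
        _ = 2 * (2*k / (2*n - k)) / k^3 := key1'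
        _ ≤ 2 * Real.log (n / (n - k)) / k^3 := key2
    have hpp : 0 < h₄ / (n - k)^2 := by positivity
    nlinarith [mul_nonneg h3.le (sub_nonneg.mpr hkey)]
  have hmono : StrictMonoOn F (Set.Ioo 1 n) := by
    apply strictMonoOn_of_deriv_pos (convex_Ioo 1 n)
    · intro k hkm
      exact (hderiv k hkm).differentiableAt.continuousAt.continuousWithinAt
    · intro k hkm
      rw [interior_Ioo] at hkm
      rw [(hderiv k hkm).deriv]
      exact hpos k hkm
  by_contra hcon
  push_neg at hcon
  have hFlt : F khat' < F khat := hmono hk' hk hcon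
  have e1 : F khat = h₄ / (n - khat)
      + h₃ * (-(1 / khat ^ 2) * Real.log (n / (n - khat)) + 1 / (khat * (n - khat))) := rfl
  have e2 : F khat' = h₄ / (n - khat')
      + h₃ * (-(1 / khat' ^ 2) * Real.log (n / (n - khat')) + 1 / (khat' * (n - khat'))) := rfl
  rw [e1, e2, ← hfoc, ← hfoc'] at hFlt
  have hk1 : 1 < khat := hk.1
  have hk1' : 1 < khat' := hk'.1
  have : h₂ / khat ^ 2 < h₂' / khat' ^ 2 := by
    rw [div_lt_div_iff₀ (by positivity) (by positivity)]
    have hsq : khat' ^ 2 < khat ^ 2 := by nlinarith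
    linarith [mul_lt_mul_of_pos_left hsq (hh2.trans hh2'),
      mul_lt_mul_of_pos_right hh2' (show (0:ℝ) < khat' ^ 2 by positivity)]
  linarith
end
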